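/- arXiv:2603.16187 — 4 statements merged into one kernel-verified Lean document; each statement's English description precedes it below -/
import Mathlib

section
/- Assume k ∣ q−1 and gcd(k+1, q) = 1, let δ be an integer with 1 ≤ δ ≤ q²−1, and let β = (0, γ^δ·α_1, …, γ^δ·α_k) ∈ F_{q²}^{k+1} (so n = k+1). If 2ℓ < k, or if k = 2ℓ and (k : F_{q²})·γ^{δ(k−ℓ+ℓq)} + Σ_{i=1}^{ℓ} a_{1i}^{1+q} ≠ 0 in F_{q²}, then the GRL code GRL_k(β, A) is Hermitian LCD. -/
open Matrix BigOperators Finset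

/-- Hermitian dual (with respect to `x ↦ x ^ q`) of a code `C ⊆ F^ι`. -/
def dualH {F : Type} [Field F] (q : ℕ) {ι : Type} [Fintype ι] (C : Submodule F (ι → F)) :
    Submodule F (ι → F) where
  carrier := {x | ∀ y ∈ C, ∑ i, x i * y i ^ q = 0}
  add_mem' := by
    intro a b ha hb y hy
    have h : ∑ i, (a + b) i * y i ^ q = (∑ i, a i * y i ^ q) + ∑ i, b i * y i ^ q := by
      rw [← Finset.sum_add_distrib]
      exact Finset.sum_congr rfl fun i _ => add_mul _ _ _
    rw [h, ha y hy, hb y hy, add_zero]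
  zero_mem' := by intro y hy; simp
  smul_mem' := by
    intro c a ha y hy
    have h : ∑ i, (c • a) i * y i ^ q = c * ∑ i, a i * y i ^ q := by
      rw [Finset.mul_sum]
      exact Finset.sum_congr rfl fun i _ => by
        simp [Pi.smul_apply, smul_eq_mul, mul_assoc]
    rw [h, ha y hy, mul_zero]

/-- Generator matrix of the generalized Roth–Lempel code: evaluation columns indexed by `ι`
(entry `β j ^ r`), extra columns indexed by `Fin ℓ` (zero for rows `r < k - ℓ`, and the
corresponding row of `A` for rows `k - ℓ ≤ r ≤ k - 1`). -/
def GRLmatrix {F : Type} [Field F] (k ℓ : ℕ) (hℓk : ℓ ≤ k) {ι : Type} (β : ι → F)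
    (A : Matrix (Fin ℓ) (Fin ℓ) F) : Matrix (Fin k) (ι ⊕ Fin ℓ) F :=
  fun r => Sum.elim (fun j => β j ^ (r : ℕ))
    (fun j' => if _h : (r : ℕ) < k - ℓ then 0
      else A ⟨(r : ℕ) - (k - ℓ), by have := r.isLt; omega⟩ j')

/-- The generalized Roth–Lempel code: the row span of `GRLmatrix`. -/
def GRLcode {F : Type} [Field F] (k ℓ : ℕ) (hℓk : ℓ ≤ k) {ι : Type} (β : ι → F)
    (A : Matrix (Fin ℓ) (Fin ℓ) F) : Submodule F ((ι ⊕ Fin ℓ) → F) :=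
  Submodule.span F (Set.range (GRLmatrix k ℓ hℓk β A))

/-!
The code is Hermitian LCD once the Hermitian Gram matrix `G s r = ⟨g_s, g_r⟩_H` of the generator
rows is nonsingular. Write `β = (0, g ζ, …, g ζ^k)` with `g = γ^δ` and `ζ` of order `k`. On the
evaluation columns, `⟨g_s, g_r⟩_H` is the power sum `0^t + Σ_i (g ζ^i)^t` at `t = s + r q`, and since
`q ≡ 1 [MOD k]` it vanishes unless `s + r ≡ 0 [MOD k]`. The extra columns only contribute in the
corner `s, r ≥ k - ℓ`. So after the column permutation `r ↦ -r` (in `Fin k`) the matrix `G` is lower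
triangular. Its diagonal entries are `k + 1` and `k g^t`, except at `s = ℓ` when `k = 2ℓ`, where the
entry is the quantity the hypothesis requires to be nonzero. Finally `k` and `k + 1` are nonzero in
`F`: both are coprime to `q`, which vanishes in `F`.
-/

def hermitianGram {F : Type} [Field F] (q : ℕ) {κ ι : Type} [Fintype ι] (v : Matrix κ ι F) :
    Matrix κ κ F :=
  Matrix.of fun s r => ∑ i, v s i * v r i ^ q

section Gram

variable {F : Type} [Field F] (q : ℕ) {κ ι ι' : Type} [Fintype ι] [Fintype ι']

theorem hermitianGram_eq_inl_add_inr (v : Matrix κ (ι ⊕ ι') F) :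
    hermitianGram q v =
      hermitianGram q (v.submatrix id Sum.inl) + hermitianGram q (v.submatrix id Sum.inr) := by
  ext s r
  simp [hermitianGram, Fintype.sum_sum_type]

theorem span_inf_dualH_eq_bot_of_det_ne_zero [Fintype κ] [DecidableEq κ] (v : Matrix κ ι F)
    (hdet : (hermitianGram q v).det ≠ 0) :
    Submodule.span F (Set.range v) ⊓ dualH q (Submodule.span F (Set.range v)) = ⊥ := by
  refine eq_bot_iff.mpr fun x hx => ?_
  obtain ⟨hxC, hxD⟩ := Submodule.mem_inf.mp hx
  obtain ⟨c, rfl⟩ := (Submodule.mem_span_range_iff_exists_fun F).mp hxC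
  have hc : vecMul c (hermitianGram q v) = 0 := by
    ext r
    have hr := hxD (v r) (Submodule.subset_span ⟨r, rfl⟩)
    simp only [Finset.sum_apply, Pi.smul_apply, smul_eq_mul, Finset.sum_mul] at hr
    rw [Finset.sum_comm] at hr
    simpa [vecMul, dotProduct, hermitianGram, Finset.mul_sum, mul_assoc] using hr
  have hc0 : c = 0 := by
    by_contra hne
    exact hdet (Matrix.exists_vecMul_eq_zero_iff.mp ⟨c, hne, hc⟩)
  simp [hc0]

end Gram

theorem Matrix.det_ne_zero_of_lowerTriangular_submatrix {m R : Type} [Fintype m] [DecidableEq m]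
    [LinearOrder m] [CommRing R] [IsDomain R] (M : Matrix m m R) (σ : Equiv.Perm m)
    (hdiag : ∀ i, M i (σ i) ≠ 0) (htri : ∀ i j, i < j → M i (σ j) = 0) : M.det ≠ 0 := by
  have hsub : (M.submatrix id σ).det = ∏ i, M i (σ i) :=
    det_of_isLowerTriangular _ fun i j hij => htri i j hij
  rw [det_permute'] at hsub
  intro h0
  rw [h0, mul_zero] at hsub
  exact prod_ne_zero_iff.mpr (fun i _ => hdiag i) hsub.symm

theorem natCast_ne_zero_of_coprime {R : Type} [Ring R] [Nontrivial R] {a b : ℕ}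
    (hab : Nat.Coprime a b) (hb : (b : R) = 0) : (a : R) ≠ 0 := fun ha =>
  CharP.ringChar_ne_one (Nat.dvd_one.mp (hab ▸ Nat.dvd_gcd (ringChar.dvd ha) (ringChar.dvd hb)))

theorem sum_fin_pow_succ_pow_of_orderOf_eq {F : Type} [Field F] {k : ℕ} {ζ : F}
    (hζ : orderOf ζ = k) (t : ℕ) :
    ∑ i : Fin k, (ζ ^ ((i : ℕ) + 1)) ^ t = if k ∣ t then (k : F) else 0 := by
  have hpow : ∀ i : ℕ, (ζ ^ (i + 1)) ^ t = (ζ ^ t) ^ (i + 1) := fun i => by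
    rw [← pow_mul, ← pow_mul, mul_comm]
  simp only [hpow]
  split_ifs with hkt
  · simp [(orderOf_dvd_iff_pow_eq_one.mp (hζ ▸ hkt))]
  · have hne : ζ ^ t ≠ 1 := fun h => hkt (hζ ▸ orderOf_dvd_of_pow_eq_one h)
    have hk : (ζ ^ t) ^ k = 1 := by rw [← pow_mul, mul_comm, pow_mul, ← hζ, pow_orderOf_eq_one, one_pow]
    rw [Fin.sum_univ_eq_sum_range (fun i => (ζ ^ t) ^ (i + 1))]
    simp only [pow_succ', ← Finset.mul_sum, geom_sum_eq hne, hk, sub_self, zero_div, mul_zero]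

theorem sum_cons_zero_pow {F : Type} [Field F] {k : ℕ} {ζ : F} (hζ : orderOf ζ = k) (g : F)
    (t : ℕ) :
    ∑ j, (Fin.cons 0 (fun i : Fin k => g * ζ ^ ((i : ℕ) + 1)) : Fin (k + 1) → F) j ^ t =
      0 ^ t + if k ∣ t then (k : F) * g ^ t else 0 := by
  simp only [Fin.sum_univ_succ, Fin.cons_zero, Fin.cons_succ, mul_pow]
  rw [← Finset.mul_sum, sum_fin_pow_succ_pow_of_orderOf_eq hζ t, mul_ite, mul_zero, mul_comm]

theorem Fin.dvd_val_add_val_mul_iff {k q : ℕ} [NeZero k] (hq : 1 ≤ q) (hkq : k ∣ q - 1)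
    (s r : Fin k) : k ∣ (s : ℕ) + r * q ↔ s + r = 0 := by
  have hsplit : (s : ℕ) + r * q = ((s : ℕ) + r) + r * (q - 1) := by
    obtain ⟨q, rfl⟩ := Nat.exists_eq_add_of_le hq
    simp [Nat.mul_add]; ring
  rw [hsplit, Nat.dvd_add_left (dvd_mul_of_dvd_right hkq (r : ℕ)), ← Fin.val_eq_val, Fin.val_add,
    Fin.val_zero, Nat.dvd_iff_mod_eq_zero]

section GRL

variable {F : Type} [Field F] {k ℓ : ℕ} (hℓk : ℓ ≤ k) {ι : Type} (β : ι → F)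
  (A : Matrix (Fin ℓ) (Fin ℓ) F) (q : ℕ)

theorem hermitianGram_GRLmatrix_inl_apply [Fintype ι] (s r : Fin k) :
    hermitianGram q ((GRLmatrix k ℓ hℓk β A).submatrix id Sum.inl) s r =
      ∑ j, β j ^ ((s : ℕ) + r * q) := by
  simp [hermitianGram, GRLmatrix, pow_add, pow_mul]

theorem hermitianGram_GRLmatrix_inr_apply_of_lt {s r : Fin k} (hq : q ≠ 0)
    (h : (s : ℕ) < k - ℓ ∨ (r : ℕ) < k - ℓ) :
    hermitianGram q ((GRLmatrix k ℓ hℓk β A).submatrix id Sum.inr) s r = 0 := by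
  refine (of_apply _ _ _).trans (Finset.sum_eq_zero fun j _ => ?_)
  rcases h with h | h <;> simp [GRLmatrix, h, hq]

theorem hermitianGram_GRLmatrix_inr_apply_self {s : Fin k} (hs : (s : ℕ) = k - ℓ) (hℓ : 0 < ℓ) :
    hermitianGram q ((GRLmatrix k ℓ hℓk β A).submatrix id Sum.inr) s s =
      ∑ j, A ⟨0, hℓ⟩ j ^ (1 + q) := by
  refine (of_apply _ _ _).trans (Finset.sum_congr rfl fun j _ => ?_)
  simp only [submatrix_apply, id, GRLmatrix, Sum.elim_inr, hs, lt_irrefl, dite_false,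
    Nat.sub_self, pow_add, pow_one]

end GRL

theorem Fin.val_neg_of_ne_zero {k : ℕ} [NeZero k] {s : Fin k} (hs : s ≠ 0) :
    ((-s : Fin k) : ℕ) = k - s := by
  have hs0 : (s : ℕ) ≠ 0 := Fin.val_ne_zero_iff.mpr hs
  rw [Fin.val_neg', Nat.mod_eq_of_lt (by omega)]

section GRLRootsOfUnity

variable {F : Type} [Field F] {k ℓ q : ℕ} (hℓk : ℓ ≤ k) (A : Matrix (Fin ℓ) (Fin ℓ) F)
  {g ζ : F} (hζ : orderOf ζ = k) {β : Fin (k + 1) → F}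
  (hβ : β = Fin.cons 0 (fun i : Fin k => g * ζ ^ ((i : ℕ) + 1)))
include hζ hβ

theorem hermitianGram_GRLmatrix_apply (s r : Fin k) :
    hermitianGram q (GRLmatrix k ℓ hℓk β A) s r =
      (0 ^ ((s : ℕ) + r * q) +
        if k ∣ (s : ℕ) + r * q then (k : F) * g ^ ((s : ℕ) + r * q) else 0) +
      hermitianGram q ((GRLmatrix k ℓ hℓk β A).submatrix id Sum.inr) s r := by
  rw [hermitianGram_eq_inl_add_inr, Matrix.add_apply, hermitianGram_GRLmatrix_inl_apply, hβ,
    sum_cons_zero_pow hζ]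

variable [NeZero k] (hq : 1 ≤ q) (hkq : k ∣ q - 1)
include hq hkq

theorem hermitianGram_GRLmatrix_apply_neg_of_lt (h2ℓ : 2 * ℓ ≤ k) {s' s : Fin k} (hlt : s' < s) :
    hermitianGram q (GRLmatrix k ℓ hℓk β A) s' (-s) = 0 := by
  have hs : s ≠ 0 := ((Fin.zero_le s').trans_lt hlt).ne'
  have hnegs := Fin.val_neg_of_ne_zero hs
  have hvs : (s' : ℕ) < s := hlt
  have ht : (s' : ℕ) + (-s : Fin k) * q ≠ 0 := by
    rw [hnegs]; have := s.isLt; have : 0 < (k - s) * q := Nat.mul_pos (by omega) hq; omega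
  have hkt : ¬ k ∣ (s' : ℕ) + (-s : Fin k) * q := by
    rw [Fin.dvd_val_add_val_mul_iff hq hkq, add_neg_eq_zero]; exact hlt.ne
  rw [hermitianGram_GRLmatrix_apply hℓk A hζ hβ, zero_pow ht, if_neg hkt,
    hermitianGram_GRLmatrix_inr_apply_of_lt hℓk β A q (by omega) (by omega)]
  simp

theorem hermitianGram_GRLmatrix_apply_neg_self_ne_zero (hℓ : 0 < ℓ) (h2ℓ : 2 * ℓ ≤ k)
    (hg : g ≠ 0) (hkF : (k : F) ≠ 0) (hk1F : (k : F) + 1 ≠ 0)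
    (hcorner : k = 2 * ℓ → (k : F) * g ^ (k - ℓ + ℓ * q) + ∑ i : Fin ℓ, A ⟨0, hℓ⟩ i ^ (1 + q) ≠ 0)
    (s : Fin k) :
    hermitianGram q (GRLmatrix k ℓ hℓk β A) s (-s) ≠ 0 := by
  rw [hermitianGram_GRLmatrix_apply hℓk A hζ hβ]
  by_cases hs : s = 0
  · subst hs
    rw [neg_zero, hermitianGram_GRLmatrix_inr_apply_of_lt hℓk β A q (by omega) (by simp; omega)]
    simpa [add_comm] using hk1F
  have hnegs := Fin.val_neg_of_ne_zero hs
  have hs0 : (s : ℕ) ≠ 0 := Fin.val_ne_zero_iff.mpr hs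
  have ht : (s : ℕ) + (-s : Fin k) * q ≠ 0 := by omega
  have hkt : k ∣ (s : ℕ) + (-s : Fin k) * q :=
    (Fin.dvd_val_add_val_mul_iff hq hkq _ _).mpr (add_neg_cancel s)
  rw [zero_pow ht, if_pos hkt, zero_add]
  by_cases hlow : (s : ℕ) < k - ℓ ∨ ((-s : Fin k) : ℕ) < k - ℓ
  · rw [hermitianGram_GRLmatrix_inr_apply_of_lt hℓk β A q (by omega) hlow, add_zero]
    exact mul_ne_zero hkF (pow_ne_zero _ hg)
  · have hk2ℓ : k = 2 * ℓ := by omega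
    have hsℓ : (s : ℕ) = k - ℓ := by omega
    have hneg : -s = s := Fin.ext (by omega)
    rw [hneg, hermitianGram_GRLmatrix_inr_apply_self hℓk β A q hsℓ hℓ, hsℓ,
      show (k - ℓ) * q = ℓ * q by rw [show k - ℓ = ℓ by omega]]
    exact hcorner hk2ℓ

end GRLRootsOfUnity

theorem GRLcode_inf_dualH_eq_bot {F : Type} [Field F] {k ℓ q : ℕ} [NeZero k] (hℓk : ℓ ≤ k)
    (A : Matrix (Fin ℓ) (Fin ℓ) F) {g ζ : F} (hζ : orderOf ζ = k) {β : Fin (k + 1) → F}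
    (hβ : β = Fin.cons 0 (fun i : Fin k => g * ζ ^ ((i : ℕ) + 1))) (hq : 1 ≤ q)
    (hkq : k ∣ q - 1) (hℓ : 0 < ℓ) (hg : g ≠ 0) (hkF : (k : F) ≠ 0) (hk1F : (k : F) + 1 ≠ 0)
    (hcase : 2 * ℓ < k ∨
      (k = 2 * ℓ ∧ (k : F) * g ^ (k - ℓ + ℓ * q) + ∑ i : Fin ℓ, A ⟨0, hℓ⟩ i ^ (1 + q) ≠ 0)) :
    GRLcode k ℓ hℓk β A ⊓ dualH q (GRLcode k ℓ hℓk β A) = ⊥ := by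
  have h2ℓ : 2 * ℓ ≤ k := by rcases hcase with h | ⟨h, -⟩ <;> omega
  have hcorner (hk : k = 2 * ℓ) := (hcase.resolve_left (by omega)).2
  refine span_inf_dualH_eq_bot_of_det_ne_zero q _ <|
    det_ne_zero_of_lowerTriangular_submatrix _ (Equiv.neg (Fin k)) ?_ ?_
  · exact hermitianGram_GRLmatrix_apply_neg_self_ne_zero hℓk A hζ hβ hq hkq hℓ h2ℓ hg hkF hk1F
      hcorner
  · exact fun _ _ hlt => hermitianGram_GRLmatrix_apply_neg_of_lt hℓk A hζ hβ hq hkq h2ℓ hlt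

/-- with `k ∣ q - 1`, `gcd(k+1, q) = 1` and `β = (0, γ^δ·α_1, …, γ^δ·α_k)`,
if `2ℓ < k`, or `k = 2ℓ` and `k·γ^{δ(k-ℓ+ℓq)} + Σ a_{1i}^{1+q} ≠ 0`, the GRL code is
Hermitian LCD. -/
theorem stmt14 {F : Type} [Field F] [Fintype F]
    (q : ℕ)
    (hcard : Fintype.card F = q ^ 2)
    (γ : Fˣ) (hγ : ∀ x : Fˣ, x ∈ Subgroup.zpowers γ)
    (k ℓ : ℕ) (hℓ2 : 2 ≤ ℓ) (hℓk : ℓ ≤ k) (hkdvd : k ∣ q ^ 2 - 1)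
    (A : Matrix (Fin ℓ) (Fin ℓ) F)
    (α : Fin k → F)
    (hα : ∀ i : Fin k, α i = (γ : F) ^ ((q ^ 2 - 1) / k * ((i : ℕ) + 1)))
    (hkq : k ∣ q - 1) (hgcd : Nat.gcd (k + 1) q = 1)
    (δ : ℕ)
    (β : Fin (k + 1) → F) (hβ : β = Fin.cons 0 (fun i => (γ : F) ^ δ * α i))
    (hcase : 2 * ℓ < k ∨
      (k = 2 * ℓ ∧ (k : F) * (γ : F) ^ (δ * (k - ℓ + ℓ * q)) +
        ∑ i : Fin ℓ, A ⟨0, by omega⟩ i ^ (1 + q) ≠ 0)) :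
    GRLcode k ℓ hℓk β A ⊓ dualH q (GRLcode k ℓ hℓk β A) = ⊥ := by
  have hcard1 : 1 < q ^ 2 := hcard ▸ Fintype.one_lt_card
  have hq1 : 1 ≤ q := Nat.pos_of_ne_zero (by rintro rfl; simp at hcard1)
  have hqF : (q : F) = 0 := by
    have h := FiniteField.cast_card_eq_zero F
    rwa [hcard, Nat.cast_pow, pow_eq_zero_iff two_ne_zero] at h
  have hkF : (k : F) ≠ 0 := natCast_ne_zero_of_coprime
    (Nat.Coprime.coprime_dvd_left hkq ((Nat.coprime_self_sub_left hq1).mpr (Nat.coprime_one_left q)))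
    hqF
  have hk1F : (k : F) + 1 ≠ 0 := by exact_mod_cast natCast_ne_zero_of_coprime hgcd hqF
  have : NeZero k := ⟨by omega⟩
  have hordγ : orderOf (γ : F) = q ^ 2 - 1 := by
    rw [orderOf_units, orderOf_eq_card_of_forall_mem_zpowers hγ, Nat.card_units,
      Nat.card_eq_fintype_card, hcard]
  have hζ : orderOf ((γ : F) ^ ((q ^ 2 - 1) / k)) = k := by
    rw [← hordγ, orderOf_pow_orderOf_div (by omega) (hordγ ▸ hkdvd)]
  have hβ' : β = Fin.cons 0 (fun i : Fin k =>
      (γ : F) ^ δ * ((γ : F) ^ ((q ^ 2 - 1) / k)) ^ ((i : ℕ) + 1)) := by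
    simp_rw [hβ, hα, pow_mul]
  refine GRLcode_inf_dualH_eq_bot hℓk A hζ hβ' hq1 hkq (by omega) (pow_ne_zero _ γ.ne_zero)
    hkF hk1F ?_
  simpa only [← pow_mul] using hcase
end

section
/- Assume k ∣ q+1 and gcd(k+1, q) = 1, let δ be an integer with 1 ≤ δ ≤ q²−1, and let β = (0, γ^δ·α_1, …, γ^δ·α_k) ∈ F_{q²}^{k+1} (so n = k+1). Then the Hermitian hull of GRL_k(β, A) has F_{q²}-dimension at most ℓ. -/
open Matrix BigOperators Finset

/-! The Hermitian hull of the row span of a matrix `G` with `k` rows embeds, via `c ↦ c ⬝ G`, into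
the left kernel of the Hermitian Gram matrix `M = G ⬝ (G^(q))ᵀ`, so its dimension is at most
`k - rank M`. For the GRL generator matrix, `M` is the Gram matrix of the evaluation block plus a
matrix of rank at most `ℓ` coming from the `ℓ` extra columns. The nonzero evaluation points are
`c ω^i` with `ω` a primitive `k`-th root of unity, and `q ≡ -1 (mod k)`, so orthogonality of
characters makes the evaluation Gram matrix diagonal with entries `k + 1` and `k c^(r(q+1))`.
These are nonzero because `k` and `k + 1` are prime to `q`; hence `rank M ≥ k - ℓ`. -/

namespace Matrix

variable {F : Type} [Field F] {κ ι ι' : Type}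

theorem rank_add_le [Fintype κ] (M N : Matrix κ κ F) : (M + N).rank ≤ M.rank + N.rank := by
  refine (Submodule.finrank_mono ?_).trans (Submodule.finrank_add_le_finrank_add_finrank _ _)
  rintro x ⟨c, rfl⟩
  rw [mulVecLin_add]
  exact Submodule.add_mem_sup (LinearMap.mem_range_self _ c) (LinearMap.mem_range_self _ c)

variable [Fintype ι] [Fintype ι']

def gramH (q : ℕ) (G : Matrix κ ι F) : Matrix κ κ F := G * (G.map (· ^ q))ᵀ

theorem gramH_apply (q : ℕ) (G : Matrix κ ι F) (r s : κ) :
    gramH q G r s = ∑ i, G r i * G s i ^ q := rfl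

theorem gramH_fromCols (q : ℕ) (V : Matrix κ ι F) (W : Matrix κ ι' F) :
    gramH q (fromCols V W) = gramH q V + gramH q W := by
  rw [gramH, fromCols_map, transpose_fromCols, fromCols_mul_fromRows, gramH, gramH]

variable [Fintype κ]

theorem vecMul_gramH (q : ℕ) (G : Matrix κ ι F) (c : κ → F) (s : κ) :
    vecMul c (gramH q G) s = ∑ i, vecMul c G i * G s i ^ q := by
  rw [gramH, ← vecMul_vecMul]; rfl

theorem finrank_inf_dualH_add_rank_gramH_le (q : ℕ) (G : Matrix κ ι F) :
    Module.finrank F ↥(Submodule.span F (Set.range G) ⊓ dualH q (Submodule.span F (Set.range G)))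
      + (gramH q G).rank ≤ Fintype.card κ := by
  have hull_le : Submodule.span F (Set.range G) ⊓ dualH q (Submodule.span F (Set.range G)) ≤
      (LinearMap.ker (gramH q G)ᵀ.mulVecLin).map G.vecMulLinear := by
    rintro x ⟨hx, hdual⟩
    obtain ⟨c, rfl⟩ : x ∈ LinearMap.range G.vecMulLinear := by rwa [range_vecMulLinear]
    refine ⟨c, funext fun s => ?_, rfl⟩
    rw [mulVecLin_apply, mulVec_transpose, vecMul_gramH]
    exact hdual _ (Submodule.subset_span ⟨s, rfl⟩)
  have rank_nullity := LinearMap.finrank_range_add_finrank_ker (gramH q G)ᵀ.mulVecLin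
  rw [Module.finrank_fintype_fun_eq_card] at rank_nullity
  have := (Submodule.finrank_mono hull_le).trans (Submodule.finrank_map_le _ _)
  rw [← rank_transpose (gramH q G)]
  unfold rank
  omega

theorem finrank_inf_dualH_fromCols_le [DecidableEq κ] {q : ℕ} {V : Matrix κ ι F}
    (W : Matrix κ ι' F) (hV : IsUnit (gramH q V)) :
    Module.finrank F ↥(Submodule.span F (Set.range (fromCols V W)) ⊓
      dualH q (Submodule.span F (Set.range (fromCols V W)))) ≤ Fintype.card ι' := by
  have hull := finrank_inf_dualH_add_rank_gramH_le q (fromCols V W)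
  have hV_rank : (gramH q V).rank = Fintype.card κ := rank_of_isUnit _ hV
  have hW_rank : (-gramH q W).rank ≤ Fintype.card ι' := by
    rw [gramH, ← Matrix.neg_mul]
    exact (rank_mul_le_left _ _).trans (rank_le_card_width _)
  have hV_eq : gramH q V = gramH q (fromCols V W) + -gramH q W := by
    rw [gramH_fromCols, add_neg_cancel_right]
  have := rank_add_le (gramH q (fromCols V W)) (-gramH q W)
  rw [← hV_eq] at this
  omega

end Matrix

theorem IsPrimitiveRoot.sum_pow_mul_succ {F : Type} [Field F] {ω : F} {k : ℕ}
    (hω : IsPrimitiveRoot ω k) (x : ℕ) :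
    ∑ i : Fin k, ω ^ (x * ((i : ℕ) + 1)) = if k ∣ x then (k : F) else 0 := by
  simp_rw [pow_mul]
  split_ifs with hx
  · simp [(hω.pow_eq_one_iff_dvd x).2 hx]
  · have hne : ω ^ x ≠ 1 := fun h => hx ((hω.pow_eq_one_iff_dvd x).1 h)
    have hroot : (ω ^ x) ^ k = 1 := by rw [← pow_mul, mul_comm, pow_mul, hω.pow_eq_one, one_pow]
    simp_rw [pow_succ, ← Finset.sum_mul]
    rw [Fin.sum_univ_eq_sum_range (fun i => (ω ^ x) ^ i), geom_sum_eq hne, hroot, sub_self,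
      zero_div, zero_mul]

theorem Nat.dvd_add_mul_iff_eq {k q r s : ℕ} (hkq : k ∣ q + 1) (hr : r < k) (hs : s < k) :
    k ∣ r + s * q ↔ r = s := by
  have hq : (q : ZMod k) = -1 :=
    eq_neg_of_add_eq_zero_left (by exact_mod_cast (ZMod.natCast_eq_zero_iff _ _).2 hkq)
  rw [← ZMod.natCast_eq_zero_iff, Nat.cast_add, Nat.cast_mul, hq, mul_neg_one, ← sub_eq_add_neg,
    sub_eq_zero, ZMod.natCast_eq_natCast_iff', Nat.mod_eq_of_lt hr, Nat.mod_eq_of_lt hs]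

theorem FiniteField.natCast_ne_zero_of_coprime_card {F : Type} [Field F] [Fintype F] {n : ℕ}
    (h : n.Coprime (Fintype.card F)) : (n : F) ≠ 0 := by
  have := (Nat.isCoprime_iff_coprime.2 h).map (Int.castRingHom F)
  simpa [Nat.cast_card_eq_zero] using this

theorem isPrimitiveRoot_pow_div_of_forall_mem_zpowers {F : Type} [Field F] [Fintype F] {γ : Fˣ}
    (hγ : ∀ x : Fˣ, x ∈ Subgroup.zpowers γ) {k : ℕ} (hk : k ∣ Fintype.card F - 1) :
    IsPrimitiveRoot ((γ : F) ^ ((Fintype.card F - 1) / k)) k := by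
  classical
  have hγ_root : IsPrimitiveRoot (γ : F) (Fintype.card F - 1) := by
    rw [← Fintype.card_units, ← Nat.card_eq_fintype_card,
      ← orderOf_eq_card_of_forall_mem_zpowers hγ, ← orderOf_units]
    exact IsPrimitiveRoot.orderOf _
  have hcard : Fintype.card F - 1 ≠ 0 := by have := Fintype.one_lt_card (α := F); omega
  have hquot : (Fintype.card F - 1) / k ≠ 0 :=
    left_ne_zero_of_mul (by rwa [Nat.div_mul_cancel hk])
  simpa [Nat.div_div_self hk hcard] using hγ_root.pow_of_dvd hquot (Nat.div_dvd_of_dvd hk)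

namespace Matrix

variable {F : Type} [Field F]

def powMatrix (k : ℕ) {ι : Type} (β : ι → F) : Matrix (Fin k) ι F :=
  of fun r j => β j ^ (r : ℕ)

theorem GRLmatrix_toCols₁ {k ℓ : ℕ} (hℓk : ℓ ≤ k) {ι : Type} {β : ι → F}
    (A : Matrix (Fin ℓ) (Fin ℓ) F) : (GRLmatrix k ℓ hℓk β A).toCols₁ = powMatrix k β := rfl

variable {k q : ℕ} {ω : F}

theorem gramH_powMatrix_cons_zero (hω : IsPrimitiveRoot ω k) (hkq : k ∣ q + 1) (hq : q ≠ 0)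
    (c : F) :
    gramH q (powMatrix k (Fin.cons 0 fun i : Fin k => c * ω ^ ((i : ℕ) + 1))) =
      diagonal fun r : Fin k => k * c ^ ((r : ℕ) * (q + 1)) + if (r : ℕ) = 0 then 1 else 0 := by
  ext r s
  have hterm (i : Fin k) :
      (c * ω ^ ((i : ℕ) + 1)) ^ (r : ℕ) * ((c * ω ^ ((i : ℕ) + 1)) ^ (s : ℕ)) ^ q =
        c ^ ((r : ℕ) + s * q) * ω ^ (((r : ℕ) + s * q) * ((i : ℕ) + 1)) := by
    ring
  simp only [gramH_apply, powMatrix, of_apply, Fin.sum_univ_succ, Fin.cons_zero, Fin.cons_succ,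
    hterm, ← Finset.mul_sum, hω.sum_pow_mul_succ, Nat.dvd_add_mul_iff_eq hkq r.isLt s.isLt]
  by_cases hrs : r = s
  · subst hrs
    rw [diagonal_apply_eq, if_pos rfl]
    rcases eq_or_ne (r : ℕ) 0 with hr | hr <;> simp [hr, hq] <;> ring
  · have hrs' : (r : ℕ) ≠ s := fun h => hrs (Fin.ext h)
    rw [diagonal_apply_ne _ hrs, if_neg hrs', mul_zero, add_zero]
    rcases eq_or_ne (r : ℕ) 0 with hr | hr
    · simp [hr, hq, (hr ▸ hrs').symm]
    · simp [hr]

theorem isUnit_gramH_powMatrix_cons_zero (hω : IsPrimitiveRoot ω k) (hkq : k ∣ q + 1)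
    (hq : q ≠ 0) (hk : (k : F) ≠ 0) (hk1 : ((k + 1 : ℕ) : F) ≠ 0) {c : F} (hc : c ≠ 0) :
    IsUnit (gramH q (powMatrix k (Fin.cons 0 fun i : Fin k => c * ω ^ ((i : ℕ) + 1)))) := by
  rw [gramH_powMatrix_cons_zero hω hkq hq, isUnit_diagonal, Pi.isUnit_iff]
  intro r
  rcases eq_or_ne (r : ℕ) 0 with hr | hr
  · simpa [hr] using hk1
  · simpa [hr] using ⟨hk, hc⟩

end Matrix

theorem stmt15_general {F : Type} [Field F] [Fintype F]
    (q : ℕ)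
    (hcard : Fintype.card F = q ^ 2)
    (γ : Fˣ) (hγ : ∀ x : Fˣ, x ∈ Subgroup.zpowers γ)
    (k ℓ : ℕ) (hℓk : ℓ ≤ k) (hkdvd : k ∣ q ^ 2 - 1)
    (A : Matrix (Fin ℓ) (Fin ℓ) F)
    (α : Fin k → F)
    (hα : ∀ i : Fin k, α i = (γ : F) ^ ((q ^ 2 - 1) / k * ((i : ℕ) + 1)))
    (hkq : k ∣ q + 1) (hgcd : Nat.gcd (k + 1) q = 1)
    (δ : ℕ)
    (β : Fin (k + 1) → F) (hβ : β = Fin.cons 0 (fun i => (γ : F) ^ δ * α i)) :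
    Module.finrank F ↥(GRLcode k ℓ hℓk β A ⊓ dualH q (GRLcode k ℓ hℓk β A)) ≤ ℓ := by
  have hω := isPrimitiveRoot_pow_div_of_forall_mem_zpowers hγ (hcard ▸ hkdvd)
  rw [hcard] at hω
  have hβ' : β = Fin.cons 0 fun i : Fin k =>
      (γ : F) ^ δ * ((γ : F) ^ ((q ^ 2 - 1) / k)) ^ ((i : ℕ) + 1) := by
    simp_rw [hβ, hα, pow_mul]
  have hq : q ≠ 0 := by rintro rfl; simp at hcard
  have hk : (k : F) ≠ 0 := FiniteField.natCast_ne_zero_of_coprime_card <| by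
    rw [hcard]
    exact Nat.Coprime.pow_right 2 (Nat.Coprime.coprime_dvd_left hkq (by simp))
  have hk1 : ((k + 1 : ℕ) : F) ≠ 0 := FiniteField.natCast_ne_zero_of_coprime_card <| by
    rw [hcard]
    exact Nat.Coprime.pow_right 2 hgcd
  have hV := isUnit_gramH_powMatrix_cons_zero hω hkq hq hk hk1 (pow_ne_zero δ γ.ne_zero)
  rw [← hβ', ← GRLmatrix_toCols₁ hℓk A] at hV
  have hull := finrank_inf_dualH_fromCols_le (GRLmatrix k ℓ hℓk β A).toCols₂ hV
  rwa [fromCols_toCols, Fintype.card_fin] at hull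

/-- with `k ∣ q + 1`, `gcd(k+1, q) = 1` and `β = (0, γ^δ·α_1, …, γ^δ·α_k)`,
the Hermitian hull of the GRL code has dimension at most `ℓ`. -/
theorem stmt15 {F : Type} [Field F] [Fintype F]
    (q p m : ℕ) (hp : p.Prime) (hodd : Odd p) (hm : 0 < m) (hq : q = p ^ m)
    (hcard : Fintype.card F = q ^ 2)
    (γ : Fˣ) (hγ : ∀ x : Fˣ, x ∈ Subgroup.zpowers γ)
    (k ℓ : ℕ) (hℓ2 : 2 ≤ ℓ) (hℓk : ℓ ≤ k) (hkdvd : k ∣ q ^ 2 - 1)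
    (A : Matrix (Fin ℓ) (Fin ℓ) F) (hA : IsUnit A.det)
    (α : Fin k → F)
    (hα : ∀ i : Fin k, α i = (γ : F) ^ ((q ^ 2 - 1) / k * ((i : ℕ) + 1)))
    (hkq : k ∣ q + 1) (hgcd : Nat.gcd (k + 1) q = 1)
    (δ : ℕ) (hδ1 : 1 ≤ δ) (hδq : δ ≤ q ^ 2 - 1)
    (β : Fin (k + 1) → F) (hβ : β = Fin.cons 0 (fun i => (γ : F) ^ δ * α i)) :
    Module.finrank F ↥(GRLcode k ℓ hℓk β A ⊓ dualH q (GRLcode k ℓ hℓk β A)) ≤ ℓ :=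
  stmt15_general q hcard γ hγ k ℓ hℓk hkdvd A α hα hkq hgcd δ β hβ
end

section
/- Let T = {v₂(q²−1) − 1 − v₂(i+(k−i)q) : 1 ≤ i ≤ k−1} and let s, t be integers with 1 ≤ s, t ≤ q²−1 and s ≠ t. Assume v₂(s−t) ∉ T, (q²−1)/k does not divide s−t, gcd(2k, q) = 1, and k ∣ q−1, and let β = (γ^s·α_1, …, γ^s·α_k, γ^t·α_1, …, γ^t·α_k) ∈ F_{q²}^{2k} (so n = 2k; its entries are pairwise distinct). If 2ℓ < k, or if k = 2ℓ and (k : F_{q²})·(γ^{s(k−ℓ+ℓq)} + γ^{t(k−ℓ+ℓq)}) + Σ_{i=1}^{ℓ} a_{1i}^{1+q} ≠ 0 in F_{q²}, then the GRL code GRL_k(β, A) is Hermitian LCD. -/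
open Matrix BigOperators Finset

lemma sumroot {F : Type} [Field F] (γ : Fˣ) (N k : ℕ) (hN : orderOf γ = N)
    (hk : k ∣ N) (hN0 : 0 < N) (hk0 : 0 < k) (e : ℕ) :
    (∑ i : Fin k, ((γ : F) ^ (N / k * ((i : ℕ) + 1))) ^ e) = if k ∣ e then (k : F) else 0 := by
  have key : ∀ n : ℕ, ((γ : F) ^ n = 1 ↔ N ∣ n) := by
    intro n
    rw [← Units.val_pow_eq_pow_val, Units.val_eq_one, ← orderOf_dvd_iff_pow_eq_one, hN]
  obtain ⟨w, hw⟩ := hk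
  have hw0 : 0 < w := by
    rcases Nat.eq_zero_or_pos w with h0 | h0
    · rw [h0, mul_zero] at hw; omega
    · exact h0
  have hNk : N / k = w := by rw [hw]; exact Nat.mul_div_cancel_left w hk0
  have hterm : ∀ i : Fin k, ((γ : F) ^ (N / k * ((i : ℕ) + 1))) ^ e
      = ((γ : F) ^ (w * e)) ^ ((i : ℕ) + 1) := by
    intro i; rw [hNk, ← pow_mul, ← pow_mul]; ring_nf
  simp only [hterm]
  set ζ : F := (γ : F) ^ (w * e) with hζ
  have hζk : ζ ^ k = 1 := by
    rw [hζ, ← pow_mul, key, hw]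
    exact ⟨e, by ring⟩
  by_cases hke : k ∣ e
  · obtain ⟨d, hd⟩ := hke
    have hζ1 : ζ = 1 := by
      rw [hζ, key, hw, hd]
      exact ⟨d, by ring⟩
    rw [if_pos ⟨d, hd⟩]
    simp [hζ1]
  · have hζ1 : ζ ≠ 1 := by
      intro h
      rw [hζ, key, hw] at h
      exact hke ((Nat.mul_dvd_mul_iff_left hw0).mp (by rwa [mul_comm k w] at h))
    have hsum : (∑ i : Fin k, ζ ^ ((i : ℕ) + 1)) = (∑ i ∈ range k, ζ ^ i) * ζ := by
      rw [Finset.sum_mul, ← Fin.sum_univ_eq_sum_range (fun i => ζ ^ i * ζ) k]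
      exact Finset.sum_congr rfl fun i _ => by rw [← pow_succ]
    have hg : (∑ i ∈ range k, ζ ^ i) * (ζ - 1) = 0 := by
      rw [geom_sum_mul, hζk, sub_self]
    rcases mul_eq_zero.mp hg with h | h
    · rw [if_neg hke, hsum, h, zero_mul]
    · exact absurd (by rw [← sub_eq_zero]; exact h) hζ1

/-- with `v₂(s-t)` avoiding the set
`T = {v₂(q²-1) - 1 - v₂(i+(k-i)q) : 1 ≤ i ≤ k-1}`, `(q²-1)/k ∤ s-t`, `gcd(2k, q) = 1`,
`k ∣ q - 1` and `β = (γ^s·α_1, …, γ^s·α_k, γ^t·α_1, …, γ^t·α_k)`, if `2ℓ < k`, or `k = 2ℓ`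
and `k·(γ^{s(k-ℓ+ℓq)} + γ^{t(k-ℓ+ℓq)}) + Σ a_{1i}^{1+q} ≠ 0`, the GRL code is Hermitian
LCD. -/
theorem stmt16 {F : Type} [Field F] [Fintype F]
    (q p m : ℕ) (hp : p.Prime) (hodd : Odd p) (hm : 0 < m) (hq : q = p ^ m)
    (hcard : Fintype.card F = q ^ 2)
    (γ : Fˣ) (hγ : ∀ x : Fˣ, x ∈ Subgroup.zpowers γ)
    (k ℓ : ℕ) (hℓ2 : 2 ≤ ℓ) (hℓk : ℓ ≤ k) (hkdvd : k ∣ q ^ 2 - 1)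
    (A : Matrix (Fin ℓ) (Fin ℓ) F) (hA : IsUnit A.det)
    (α : Fin k → F)
    (hα : ∀ i : Fin k, α i = (γ : F) ^ ((q ^ 2 - 1) / k * ((i : ℕ) + 1)))
    (s t : ℕ) (hs1 : 1 ≤ s) (hsq : s ≤ q ^ 2 - 1)
    (ht1 : 1 ≤ t) (htq : t ≤ q ^ 2 - 1) (hst : s ≠ t)
    (hT : ∀ i : ℕ, 1 ≤ i → i ≤ k - 1 →
      (padicValNat 2 ((s : ℤ) - (t : ℤ)).natAbs : ℤ) ≠
        (padicValNat 2 (q ^ 2 - 1) : ℤ) - 1 - (padicValNat 2 (i + (k - i) * q) : ℤ))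
    (hdvd : ¬ ((((q ^ 2 - 1) / k : ℕ) : ℤ) ∣ ((s : ℤ) - (t : ℤ))))
    (hgcd : Nat.gcd (2 * k) q = 1) (hkq : k ∣ q - 1)
    (β : (Fin k ⊕ Fin k) → F)
    (hβ : β = Sum.elim (fun i : Fin k => (γ : F) ^ s * α i)
      (fun i : Fin k => (γ : F) ^ t * α i))
    (hcase : 2 * ℓ < k ∨
      (k = 2 * ℓ ∧
        (k : F) * ((γ : F) ^ (s * (k - ℓ + ℓ * q)) + (γ : F) ^ (t * (k - ℓ + ℓ * q))) +
          ∑ i : Fin ℓ, A ⟨0, by omega⟩ i ^ (1 + q) ≠ 0)) :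
    GRLcode k ℓ hℓk β A ⊓ dualH q (GRLcode k ℓ hℓk β A) = ⊥ := by
  classical
  subst hβ
  -- basic numerics
  have hp2 : p ≠ 2 := by rintro rfl; exact (by decide : ¬ Odd 2) hodd
  have hp3 : 3 ≤ p := by have := hp.two_le; omega
  have hq3 : 3 ≤ q := by
    rw [hq]
    calc 3 ≤ p := hp3
    _ ≤ p ^ m := Nat.le_self_pow (by omega) p
  have hq9 : 9 ≤ q ^ 2 := by nlinarith
  have hN0 : 0 < q ^ 2 - 1 := by omega
  have hk0 : 0 < k := by omega
  have hqodd : Odd q := by rw [hq]; exact hodd.pow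
  have hNeven : 2 ∣ q ^ 2 - 1 := by
    obtain ⟨j, hj⟩ := hqodd.pow (n := 2)
    omega
  -- order of γ
  have horder : orderOf γ = q ^ 2 - 1 := by
    rw [orderOf_eq_card_of_forall_mem_zpowers hγ, Nat.card_eq_fintype_card,
      Fintype.card_units, hcard]
  have hup : ∀ n : ℕ, ((γ : F) ^ n = 1 ↔ (q ^ 2 - 1) ∣ n) := by
    intro n
    rw [← Units.val_pow_eq_pow_val, Units.val_eq_one, ← orderOf_dvd_iff_pow_eq_one, horder]
  have huz : ∀ z : ℤ, (γ ^ z = 1 ↔ ((q ^ 2 - 1 : ℕ) : ℤ) ∣ z) := by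
    intro z; rw [← orderOf_dvd_iff_zpow_eq_one, horder]
  have hγ0 : (γ : F) ≠ 0 := Units.ne_zero γ
  -- characteristic
  have hchar : CharP F p := by
    have h1 : CharP F (ringChar F) := ringChar.charP F
    obtain ⟨n, hpr, hcardp⟩ := FiniteField.card F (ringChar F)
    have hrp : ringChar F = p := by
      have hd1 : ringChar F ∣ Fintype.card F := by
        rw [hcardp]; exact dvd_pow_self _ n.pos.ne'
      rw [hcard, hq, ← pow_mul] at hd1
      have := hpr.dvd_of_dvd_pow hd1
      exact (Nat.prime_dvd_prime_iff_eq hpr hp).mp this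
    rwa [hrp] at h1
  have hpq : p ∣ q := by rw [hq]; exact dvd_pow_self p hm.ne'
  have hpk : ¬ p ∣ k := by
    intro h
    have : p ∣ Nat.gcd (2 * k) q := Nat.dvd_gcd (Dvd.dvd.mul_left h 2) hpq
    rw [hgcd] at this
    have := Nat.dvd_one.mp this
    omega
  have hkF : (k : F) ≠ 0 := by
    rw [Ne, CharP.cast_eq_zero_iff F p k]; exact hpk
  have h2F : (2 : F) ≠ 0 := by
    have h2 : ((2 : ℕ) : F) ≠ 0 := by
      rw [Ne, CharP.cast_eq_zero_iff F p 2]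
      intro h
      exact hp2 ((Nat.prime_dvd_prime_iff_eq hp Nat.prime_two).mp h)
    exact_mod_cast h2
  -- γ^{N/2} = -1
  have hhalf : (γ : F) ^ ((q ^ 2 - 1) / 2) = -1 := by
    have hsq2 : (γ : F) ^ ((q ^ 2 - 1) / 2) * (γ : F) ^ ((q ^ 2 - 1) / 2) = 1 := by
      rw [← pow_add, show (q ^ 2 - 1) / 2 + (q ^ 2 - 1) / 2 = q ^ 2 - 1 by omega, hup]
    rcases mul_self_eq_one_iff.mp hsq2 with h | h
    · exfalso
      rw [hup] at h
      have := Nat.le_of_dvd (by omega) h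
      omega
    · exact h
  -- the key nonvanishing
  have hDne : ∀ i : ℕ, 1 ≤ i → i ≤ k - 1 →
      (γ : F) ^ (s * (i + (k - i) * q)) + (γ : F) ^ (t * (i + (k - i) * q)) ≠ 0 := by
    have hfact : Fact (Nat.Prime 2) := ⟨Nat.prime_two⟩
    intro i hi1 hi2 hzero
    set e := i + (k - i) * q with he
    have he0 : 0 < e := by omega
    have h1 : (γ : F) ^ (s * e) = -(γ : F) ^ (t * e) := eq_neg_of_add_eq_zero_left hzero
    have hzu : γ ^ (((s * e : ℕ) : ℤ) - ((t * e : ℕ) : ℤ) - (((q ^ 2 - 1) / 2 : ℕ) : ℤ)) = 1 := by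
      have hv : ((γ ^ (((s * e : ℕ) : ℤ) - ((t * e : ℕ) : ℤ) - (((q ^ 2 - 1) / 2 : ℕ) : ℤ)) :
          Fˣ) : F) = 1 := by
        rw [Units.val_zpow_eq_zpow_val, zpow_sub₀ hγ0, zpow_sub₀ hγ0, zpow_natCast,
          zpow_natCast, zpow_natCast, h1, hhalf]
        have hne : (γ : F) ^ (t * e) ≠ 0 := pow_ne_zero _ hγ0
        field_simp
      exact Units.val_eq_one.mp hv
    rw [huz] at hzu
    obtain ⟨w, hw⟩ := hzu
    have h2N : ((q ^ 2 - 1 : ℕ) : ℤ) = (((q ^ 2 - 1) / 2 : ℕ) : ℤ) * 2 := by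
      exact_mod_cast (Nat.div_mul_cancel hNeven).symm
    rw [h2N] at hw
    have hkey : ((s : ℤ) - t) * (e : ℤ) = (((q ^ 2 - 1) / 2 : ℕ) : ℤ) * (2 * w + 1) := by
      push_cast at hw ⊢
      linear_combination hw
    have hnat : ((s : ℤ) - t).natAbs * e = ((q ^ 2 - 1) / 2) * (2 * w + 1).natAbs := by
      have h5 := congrArg Int.natAbs hkey
      rwa [Int.natAbs_mul, Int.natAbs_mul, Int.natAbs_natCast, Int.natAbs_natCast] at h5
    have ha0 : ((s : ℤ) - t).natAbs ≠ 0 := by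
      have : (s : ℤ) ≠ (t : ℤ) := by exact_mod_cast hst
      omega
    have hw1 : (2 * w + 1).natAbs ≠ 0 := by omega
    have hvodd : padicValNat 2 (2 * w + 1).natAbs = 0 := by
      apply padicValNat.eq_zero_of_not_dvd
      omega
    have hih : padicValNat 2 ((s : ℤ) - t).natAbs + padicValNat 2 e
        = padicValNat 2 ((q ^ 2 - 1) / 2) := by
      have h6 := congrArg (padicValNat 2) hnat
      rwa [padicValNat.mul ha0 (by omega), padicValNat.mul (by omega) hw1, hvodd,
        add_zero] at h6
    have hv2 : padicValNat 2 ((q ^ 2 - 1) / 2) = padicValNat 2 (q ^ 2 - 1) - 1 :=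
      padicValNat.div hNeven
    have hv1 : 1 ≤ padicValNat 2 (q ^ 2 - 1) := one_le_padicValNat_of_dvd (by omega) hNeven
    exact hT i hi1 hi2 (by simp only [← he]; omega)
  -- the Gram matrix computation
  set Gm := GRLmatrix k ℓ hℓk
    (Sum.elim (fun i : Fin k => (γ : F) ^ s * α i) (fun i : Fin k => (γ : F) ^ t * α i)) A
    with hGm
  have hGr0 : ∀ (r : Fin k) (j' : Fin ℓ), (r : ℕ) < k - ℓ → Gm r (Sum.inr j') = 0 := by
    intro r j' h
    simp only [hGm, GRLmatrix, Sum.elim_inr]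
    rw [dif_pos h]
  have hGr1 : ∀ (r : Fin k) (j' : Fin ℓ) (h : ¬ (r : ℕ) < k - ℓ),
      Gm r (Sum.inr j') = A ⟨(r : ℕ) - (k - ℓ), by have := r.isLt; omega⟩ j' := by
    intro r j' h
    simp only [hGm, GRLmatrix, Sum.elim_inr]
    rw [dif_neg h]
  have hB0 : ∀ r r' : Fin k, ((r : ℕ) < k - ℓ ∨ (r' : ℕ) < k - ℓ) →
      (∑ j' : Fin ℓ, Gm r (Sum.inr j') * (Gm r' (Sum.inr j')) ^ q) = 0 := by
    intro r r' h
    apply Finset.sum_eq_zero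
    intro j' _
    rcases h with h | h
    · rw [hGr0 r j' h, zero_mul]
    · rw [hGr0 r' j' h, zero_pow (by omega), mul_zero]
  have hdiv : ∀ r r' : Fin k, (k ∣ (r : ℕ) + (r' : ℕ) * q ↔
      ((r : ℕ) + (r' : ℕ) = 0 ∨ (r : ℕ) + (r' : ℕ) = k)) := by
    intro r r'
    have hrk := r.isLt
    have hr'k := r'.isLt
    have hq1 : q - 1 + 1 = q := by omega
    have h1 : (r : ℕ) + (r' : ℕ) * q = ((r : ℕ) + (r' : ℕ)) + (r' : ℕ) * (q - 1) := by
      calc (r : ℕ) + (r' : ℕ) * q = (r : ℕ) + (r' : ℕ) * ((q - 1) + 1) := by rw [hq1]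
      _ = ((r : ℕ) + (r' : ℕ)) + (r' : ℕ) * (q - 1) := by ring
    have h2 : k ∣ (r' : ℕ) * (q - 1) := Dvd.dvd.mul_left hkq (r' : ℕ)
    rw [h1]
    constructor
    · intro h
      have h3 : k ∣ (r : ℕ) + (r' : ℕ) := by
        have h4 := Nat.dvd_sub h h2
        rwa [Nat.add_sub_cancel] at h4
      obtain ⟨cc, hcc⟩ := h3
      rcases Nat.lt_or_ge cc 2 with h4 | h4
      · interval_cases cc <;> omega
      · exfalso
        have : k * 2 ≤ k * cc := Nat.mul_le_mul_left k h4
        omega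
    · intro h
      rcases h with h | h
      · have h0 : (r' : ℕ) = 0 := by omega
        rw [h, h0]
        simp
      · rw [h]
        exact Nat.dvd_add (dvd_refl k) h2
  have hM : ∀ r r' : Fin k, (∑ j : (Fin k ⊕ Fin k) ⊕ Fin ℓ, Gm r j * (Gm r' j) ^ q) =
      (if (r : ℕ) + (r' : ℕ) = 0 ∨ (r : ℕ) + (r' : ℕ) = k then
        (k : F) * ((γ : F) ^ (s * ((r : ℕ) + (r' : ℕ) * q)) +
          (γ : F) ^ (t * ((r : ℕ) + (r' : ℕ) * q))) else 0)
      + ∑ j' : Fin ℓ, Gm r (Sum.inr j') * (Gm r' (Sum.inr j')) ^ q := by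
    intro r r'
    rw [Fintype.sum_sum_type]
    congr 1
    rw [Fintype.sum_sum_type]
    have hGl : ∀ i : Fin k, Gm r (Sum.inl (Sum.inl i)) = ((γ : F) ^ s * α i) ^ (r : ℕ) :=
      fun _ => rfl
    have hGl' : ∀ i : Fin k, Gm r' (Sum.inl (Sum.inl i)) = ((γ : F) ^ s * α i) ^ (r' : ℕ) :=
      fun _ => rfl
    have hGr : ∀ i : Fin k, Gm r (Sum.inl (Sum.inr i)) = ((γ : F) ^ t * α i) ^ (r : ℕ) :=
      fun _ => rfl
    have hGr' : ∀ i : Fin k, Gm r' (Sum.inl (Sum.inr i)) = ((γ : F) ^ t * α i) ^ (r' : ℕ) :=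
      fun _ => rfl
    have key : ∀ (u : ℕ) (i : Fin k),
        ((γ : F) ^ u * α i) ^ (r : ℕ) * (((γ : F) ^ u * α i) ^ (r' : ℕ)) ^ q
          = (γ : F) ^ (u * ((r : ℕ) + (r' : ℕ) * q)) *
            ((γ : F) ^ ((q ^ 2 - 1) / k * ((i : ℕ) + 1))) ^ ((r : ℕ) + (r' : ℕ) * q) := by
      intro u i
      rw [hα i, ← pow_mul, ← pow_add, mul_pow, ← pow_mul]
    simp only [hGl, hGl', hGr, hGr', key]
    rw [← Finset.mul_sum, ← Finset.mul_sum, sumroot γ (q ^ 2 - 1) k horder hkdvd hN0 hk0]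
    by_cases hcond : ((r : ℕ) + (r' : ℕ) = 0 ∨ (r : ℕ) + (r' : ℕ) = k)
    · rw [if_pos hcond, if_pos ((hdiv r r').mpr hcond)]
      ring
    · rw [if_neg hcond, if_neg (fun h => hcond ((hdiv r r').mp h))]
      simp
  -- now the kernel argument
  rw [Submodule.eq_bot_iff]
  intro x hx
  rw [Submodule.mem_inf] at hx
  obtain ⟨hxC, hxD⟩ := hx
  rw [GRLcode] at hxC
  replace hxC := (Submodule.mem_span_range_iff_exists_fun (R := F)).mp hxC
  obtain ⟨c, hc⟩ := hxC
  have hxj : ∀ j, x j = ∑ r : Fin k, c r * Gm r j := by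
    intro j
    rw [← hc]
    simp [Finset.sum_apply]
    rfl
  have hEq : ∀ r' : Fin k, (∑ r : Fin k, c r * (∑ j, Gm r j * (Gm r' j) ^ q)) = 0 := by
    intro r'
    have hy : (Gm r') ∈ GRLcode k ℓ hℓk
        (Sum.elim (fun i : Fin k => (γ : F) ^ s * α i) (fun i : Fin k => (γ : F) ^ t * α i)) A :=
      Submodule.subset_span ⟨r', rfl⟩
    have h0 : (∑ j, x j * (Gm r' j) ^ q) = 0 := hxD (Gm r') hy
    rw [← h0]
    simp only [Finset.mul_sum]
    rw [Finset.sum_comm]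
    refine Finset.sum_congr rfl fun j _ => ?_
    rw [hxj j, Finset.sum_mul]
    exact Finset.sum_congr rfl fun r _ => by ring
  have hcol : ∀ r' r₀ : Fin k, ((r₀ : ℕ) + (r' : ℕ) = 0 ∨ (r₀ : ℕ) + (r' : ℕ) = k) →
      (∀ r : Fin k, r ≠ r₀ → k - ℓ ≤ (r : ℕ) → k - ℓ ≤ (r' : ℕ) → c r = 0) →
      c r₀ * ((k : F) * ((γ : F) ^ (s * ((r₀ : ℕ) + (r' : ℕ) * q)) +
          (γ : F) ^ (t * ((r₀ : ℕ) + (r' : ℕ) * q))) +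
        ∑ j' : Fin ℓ, Gm r₀ (Sum.inr j') * (Gm r' (Sum.inr j')) ^ q) = 0 := by
    intro r' r₀ hsum hz
    have h := hEq r'
    have hmain : (∑ r : Fin k, c r * (∑ j, Gm r j * (Gm r' j) ^ q))
        = c r₀ * (∑ j, Gm r₀ j * (Gm r' j) ^ q) := by
      apply Finset.sum_eq_single
      · intro b _ hb
        rw [hM]
        have hif : ¬ ((b : ℕ) + (r' : ℕ) = 0 ∨ (b : ℕ) + (r' : ℕ) = k) := by
          have hb' : (b : ℕ) ≠ (r₀ : ℕ) := fun hh => hb (Fin.ext hh)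
          have := b.isLt
          have := r₀.isLt
          have := r'.isLt
          omega
        rw [if_neg hif, zero_add]
        by_cases hbc : (b : ℕ) < k - ℓ ∨ (r' : ℕ) < k - ℓ
        · rw [hB0 b r' hbc, mul_zero]
        · push_neg at hbc
          rw [hz b hb hbc.1 hbc.2, zero_mul]
      · intro hr
        exact absurd (Finset.mem_univ r₀) hr
    rw [hmain, hM, if_pos hsum] at h
    exact h
  have hGr1' : ∀ (r : Fin k) (j' : Fin ℓ) (h : ¬ (r : ℕ) < k - ℓ) (i0 : Fin ℓ),
      (i0 : ℕ) = (r : ℕ) - (k - ℓ) → Gm r (Sum.inr j') = A i0 j' := by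
    intro r j' h i0 hi0
    rw [hGr1 r j' h]
    congr 1
    exact (Fin.ext hi0).symm
  have hc0 : ∀ r : Fin k, c r = 0 := by
    have hk2l : 2 * ℓ ≤ k := by rcases hcase with h | ⟨h, _⟩ <;> omega
    have h11 : (1 + 1 : F) ≠ 0 := by rw [one_add_one_eq_two]; exact h2F
    have hph1 : ∀ r : Fin k, ((r : ℕ) = 0 ∨ ℓ + 1 ≤ (r : ℕ)) → c r = 0 := by
      intro r hr
      have hrk := r.isLt
      rcases hr with hr | hr
      · have h := hcol ⟨0, hk0⟩ r (Or.inl (by simpa using hr))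
          (by intro r'' _ _ h3; exfalso; simp at h3; omega)
        rw [hB0 r ⟨0, hk0⟩ (Or.inr (by simp; omega)), add_zero] at h
        rcases mul_eq_zero.mp h with h | h
        · exact h
        · exfalso
          rcases mul_eq_zero.mp h with h | h
          · exact hkF h
          · rw [hr] at h
            norm_num at h
            exact h2F h
      · have h := hcol ⟨k - (r : ℕ), by omega⟩ r (Or.inr (by simp))
          (by intro r'' _ _ h3; exfalso; simp at h3; omega)
        rw [hB0 r ⟨k - (r : ℕ), by omega⟩ (Or.inr (by simp; omega)), add_zero] at h
        rcases mul_eq_zero.mp h with h | h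
        · exact h
        · exfalso
          rcases mul_eq_zero.mp h with h | h
          · exact hkF h
          · exact hDne (r : ℕ) (by omega) (by omega) (by simpa using h)
    rcases hcase with hlt | ⟨hk2, hne⟩
    · intro r
      have hrk := r.isLt
      by_cases h0 : (r : ℕ) = 0 ∨ ℓ + 1 ≤ (r : ℕ)
      · exact hph1 r h0
      · push_neg at h0
        have h := hcol ⟨k - (r : ℕ), by omega⟩ r (Or.inr (by simp))
          (by intro r'' hne'' h1 _; exact hph1 r'' (Or.inr (by omega)))
        rw [hB0 r ⟨k - (r : ℕ), by omega⟩ (Or.inl (by omega)), add_zero] at h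
        rcases mul_eq_zero.mp h with h | h
        · exact h
        · exfalso
          rcases mul_eq_zero.mp h with h | h
          · exact hkF h
          · exact hDne (r : ℕ) (by omega) (by omega) (by simpa using h)
    · have hexp : k - ℓ + ℓ * q = ℓ + ℓ * q := by omega
      rw [hexp] at hne
      have hcl : c ⟨ℓ, by omega⟩ = 0 := by
        have h := hcol ⟨ℓ, by omega⟩ ⟨ℓ, by omega⟩ (Or.inr (by simp; omega))
          (by
            intro r'' hne'' h1 _
            have h2 : (r'' : ℕ) ≠ ℓ := fun hh => hne'' (Fin.ext (by simpa using hh))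
            simp at h1
            exact hph1 r'' (Or.inr (by omega)))
        have hBval : (∑ j' : Fin ℓ, Gm ⟨ℓ, by omega⟩ (Sum.inr j') *
            (Gm ⟨ℓ, by omega⟩ (Sum.inr j')) ^ q)
            = ∑ i : Fin ℓ, A ⟨0, by omega⟩ i ^ (1 + q) := by
          apply Finset.sum_congr rfl
          intro j' _
          rw [hGr1' ⟨ℓ, by omega⟩ j' (by simp; omega) ⟨0, by omega⟩ (by simp; omega),
            pow_add, pow_one]
        rw [hBval] at h
        rcases mul_eq_zero.mp h with h | h
        · exact h
        · exact absurd h hne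
      intro r
      have hrk := r.isLt
      by_cases h0 : (r : ℕ) = 0 ∨ ℓ + 1 ≤ (r : ℕ)
      · exact hph1 r h0
      · push_neg at h0
        by_cases hrl : (r : ℕ) = ℓ
        · have hre : r = ⟨ℓ, by omega⟩ := Fin.ext (by simpa using hrl)
          rw [hre]
          exact hcl
        · have h := hcol ⟨k - (r : ℕ), by omega⟩ r (Or.inr (by simp))
            (by
              intro r'' hne'' h1 _
              by_cases hh : (r'' : ℕ) = ℓ
              · have hre : r'' = ⟨ℓ, by omega⟩ := Fin.ext (by simpa using hh)
                rw [hre]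
                exact hcl
              · simp at h1
                exact hph1 r'' (Or.inr (by omega)))
          rw [hB0 r ⟨k - (r : ℕ), by omega⟩ (Or.inl (by omega)), add_zero] at h
          rcases mul_eq_zero.mp h with h | h
          · exact h
          · exfalso
            rcases mul_eq_zero.mp h with h | h
            · exact hkF h
            · exact hDne (r : ℕ) (by omega) (by omega) (by simpa using h)
  funext j
  rw [hxj j]
  simp [hc0]
end

section
/- For 1 ≤ i ≤ k−1 set Δ_i = i + (k−i)q. Let δ be an integer with 1 ≤ δ ≤ q, assume gcd((δ+1)k, q) = 1, k ∣ q−1, and that for every 1 ≤ i ≤ k−1 the integer (q²−1)/gcd(q²−1, Δ_i) does not divide δ+1. Let β = (α_1,…,α_k, γ·α_1,…,γ·α_k, …, γ^δ·α_1,…,γ^δ·α_k) ∈ F_{q²}^{(δ+1)k} (so n = (δ+1)k; its entries are pairwise distinct). If 2ℓ < k, or if k = 2ℓ and (k : F_{q²})·Σ_{j=0}^{δ} γ^{j(ℓ+(k−ℓ)q)} + Σ_{i=1}^{ℓ} a_{1i}^{1+q} ≠ 0 in F_{q²}, then the GRL code GRL_k(β, A) is Hermitian LCD. -/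
open Matrix BigOperators Finset

lemma unit_pow_one_iff {F : Type} [Field F] [Fintype F] (γ : Fˣ)
    (hγ : ∀ x : Fˣ, x ∈ Subgroup.zpowers γ) (n : ℕ) :
    (γ : F) ^ n = 1 ↔ (Fintype.card F - 1) ∣ n := by
  have h1 : orderOf γ = Fintype.card F - 1 := by
    rw [orderOf_eq_card_of_forall_mem_zpowers hγ, Nat.card_units, Nat.card_eq_fintype_card]
  have h2 : (γ : F) ^ n = 1 ↔ γ ^ n = 1 := by
    rw [← Units.val_pow_eq_pow_val, Units.val_eq_one]
  rw [h2, ← orderOf_dvd_iff_pow_eq_one, h1]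

lemma alpha_sum {F : Type} [Field F] [Fintype F] (q : ℕ) (hq2 : 2 ≤ q)
    (hcard : Fintype.card F = q ^ 2)
    (γ : Fˣ) (hγ : ∀ x : Fˣ, x ∈ Subgroup.zpowers γ)
    (k : ℕ) (hkdvd : k ∣ q ^ 2 - 1)
    (α : Fin k → F) (hα : ∀ i : Fin k, α i = (γ : F) ^ ((q ^ 2 - 1) / k * ((i : ℕ) + 1)))
    (e : ℕ) : ∑ i, α i ^ e = if k ∣ e then (k : F) else 0 := by
  have hcard1 : Fintype.card F - 1 = q ^ 2 - 1 := by rw [hcard]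
  have hq21 : 1 ≤ q ^ 2 - 1 := by
    have : 4 ≤ q ^ 2 := by nlinarith
    omega
  set M := (q ^ 2 - 1) / k with hM
  have hMk : M * k = q ^ 2 - 1 := Nat.div_mul_cancel hkdvd
  have hMpos : 0 < M := by
    rcases Nat.eq_zero_or_pos M with h | h
    · rw [h, zero_mul] at hMk; omega
    · exact h
  have hterm : ∀ i : Fin k, α i ^ e = ((γ : F) ^ (M * e)) ^ ((i : ℕ) + 1) := by
    intro i
    rw [hα i, ← pow_mul, ← pow_mul]
    ring_nf
  by_cases hke : k ∣ e
  · have hx1 : (γ : F) ^ (M * e) = 1 := by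
      rw [unit_pow_one_iff γ hγ, hcard1]
      obtain ⟨c, hc⟩ := hke
      exact ⟨c, by rw [hc, ← hMk]; ring⟩
    simp only [hterm, hx1, one_pow, if_pos hke]
    simp [Finset.sum_const]
  · have hx1 : (γ : F) ^ (M * e) ≠ 1 := by
      intro hc
      rw [unit_pow_one_iff γ hγ, hcard1] at hc
      obtain ⟨c, hc⟩ := hc
      apply hke
      refine ⟨c, ?_⟩
      have : M * e = M * (k * c) := by rw [hc, ← hMk]; ring
      exact Nat.eq_of_mul_eq_mul_left hMpos this
    have hxk : ((γ : F) ^ (M * e)) ^ k = 1 := by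
      rw [← pow_mul, unit_pow_one_iff γ hγ, hcard1]
      exact ⟨e, by rw [← hMk]; ring⟩
    rw [if_neg hke]
    set x := (γ : F) ^ (M * e)
    calc ∑ i : Fin k, α i ^ e = ∑ i ∈ range k, x ^ (i + 1) := by
          rw [← Fin.sum_univ_eq_sum_range (fun i => x ^ (i + 1)) k]
          exact Finset.sum_congr rfl fun i _ => hterm i
      _ = ∑ i ∈ range k, x * x ^ i := by
          exact Finset.sum_congr rfl fun i _ => by rw [pow_succ, mul_comm]
      _ = x * ((x ^ k - 1) / (x - 1)) := by rw [← Finset.mul_sum, geom_sum_eq hx1]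
      _ = 0 := by rw [hxk, sub_self, zero_div, mul_zero]

lemma geom_ne_zero {F : Type} [Field F] [Fintype F] (q : ℕ)
    (hcard : Fintype.card F = q ^ 2)
    (γ : Fˣ) (hγ : ∀ x : Fˣ, x ∈ Subgroup.zpowers γ)
    (Δ d : ℕ)
    (h : ¬ ((q ^ 2 - 1) / Nat.gcd (q ^ 2 - 1) Δ ∣ d)) :
    ∑ t ∈ range d, ((γ : F) ^ Δ) ^ t ≠ 0 := by
  have hord : orderOf γ = q ^ 2 - 1 := by
    rw [orderOf_eq_card_of_forall_mem_zpowers hγ, Nat.card_units, Nat.card_eq_fintype_card, hcard]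
  have hordpow : orderOf (γ ^ Δ) = (q ^ 2 - 1) / Nat.gcd (q ^ 2 - 1) Δ := by
    rw [orderOf_pow, hord]
  have hyd : (γ ^ Δ) ^ d ≠ 1 := by
    intro hc
    exact h (hordpow ▸ orderOf_dvd_of_pow_eq_one hc)
  have hy1 : ((γ : F) ^ Δ) ≠ 1 := by
    intro hc
    apply hyd
    have : (γ ^ Δ : Fˣ) = 1 := Units.ext (by rw [Units.val_pow_eq_pow_val]; exact hc)
    rw [this, one_pow]
  have hydF : ((γ : F) ^ Δ) ^ d - 1 ≠ 0 := by
    rw [sub_ne_zero]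
    intro hc
    exact hyd (Units.ext (by rw [Units.val_pow_eq_pow_val, Units.val_pow_eq_pow_val]; exact hc))
  rw [geom_sum_eq hy1]
  exact div_ne_zero hydF (sub_ne_zero.mpr hy1)

lemma dvd_unique_row {k r r' s : ℕ} (h1 : r < k) (h2 : r' < k)
    (d1 : k ∣ r + s) (d2 : k ∣ r' + s) : r = r' := by
  rcases le_total r r' with h | h
  · have hd : k ∣ r' - r := by
      have := Nat.dvd_sub d2 d1
      have he : r' + s - (r + s) = r' - r := by omega
      rwa [he] at this
    rcases Nat.eq_zero_or_pos (r' - r) with h0 | h0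
    · omega
    · have := Nat.le_of_dvd h0 hd; omega
  · have hd : k ∣ r - r' := by
      have := Nat.dvd_sub d1 d2
      have he : r + s - (r' + s) = r - r' := by omega
      rwa [he] at this
    rcases Nat.eq_zero_or_pos (r - r') with h0 | h0
    · omega
    · have := Nat.le_of_dvd h0 hd; omega

section S
variable {F : Type} [Field F] [Fintype F] (q : ℕ) (γ : Fˣ) (k ℓ : ℕ) (hℓk : ℓ ≤ k)
  (A : Matrix (Fin ℓ) (Fin ℓ) F) (δ : ℕ) (α : Fin k → F)
  (β : (Fin (δ + 1) × Fin k) → F)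
  (hβ : ∀ j : Fin (δ + 1) × Fin k, β j = (γ : F) ^ (j.1 : ℕ) * α j.2)

include hβ in
lemma Msum_eq (r s : Fin k) :
    ∑ j, GRLmatrix k ℓ hℓk β A r j * (GRLmatrix k ℓ hℓk β A s j) ^ q
      = (∑ t ∈ range (δ + 1), ((γ : F) ^ ((r : ℕ) + (s : ℕ) * q)) ^ t)
          * (∑ i : Fin k, α i ^ ((r : ℕ) + (s : ℕ) * q))
        + ∑ i : Fin ℓ, GRLmatrix k ℓ hℓk β A r (Sum.inr i)
            * (GRLmatrix k ℓ hℓk β A s (Sum.inr i)) ^ q := by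
  rw [Fintype.sum_sum_type]
  congr 1
  set e := (r : ℕ) + (s : ℕ) * q with he
  have hterm : ∀ j : Fin (δ + 1) × Fin k,
      GRLmatrix k ℓ hℓk β A r (Sum.inl j) * (GRLmatrix k ℓ hℓk β A s (Sum.inl j)) ^ q
        = ((γ : F) ^ e) ^ (j.1 : ℕ) * (α j.2) ^ e := by
    intro j
    show β j ^ (r : ℕ) * (β j ^ (s : ℕ)) ^ q = _
    rw [← pow_mul, ← pow_add, hβ j, mul_pow, ← pow_mul, mul_comm (j.1 : ℕ) e, pow_mul]
  calc ∑ j : Fin (δ + 1) × Fin k, GRLmatrix k ℓ hℓk β A r (Sum.inl j)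
          * (GRLmatrix k ℓ hℓk β A s (Sum.inl j)) ^ q
      = ∑ j : Fin (δ + 1) × Fin k, ((γ : F) ^ e) ^ (j.1 : ℕ) * (α j.2) ^ e :=
        Finset.sum_congr rfl fun j _ => hterm j
    _ = (∑ t : Fin (δ + 1), ((γ : F) ^ e) ^ (t : ℕ)) * (∑ i : Fin k, α i ^ e) := by
        rw [Finset.sum_mul_sum, Fintype.sum_prod_type]
    _ = (∑ t ∈ range (δ + 1), ((γ : F) ^ e) ^ t) * (∑ i : Fin k, α i ^ e) := by
        rw [Fin.sum_univ_eq_sum_range (fun t => ((γ : F) ^ e) ^ t) (δ + 1)]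

omit [Fintype F] in
lemma Brow_zero (r s : Fin k) (hr : (r : ℕ) < k - ℓ) :
    ∑ i : Fin ℓ, GRLmatrix k ℓ hℓk β A r (Sum.inr i)
      * (GRLmatrix k ℓ hℓk β A s (Sum.inr i)) ^ q = 0 := by
  apply Finset.sum_eq_zero
  intro i _
  show (if _h : (r : ℕ) < k - ℓ then (0:F) else _) * _ = 0
  rw [dif_pos hr, zero_mul]

omit [Fintype F] in
lemma Bcol_zero (hq : q ≠ 0) (r s : Fin k) (hs : (s : ℕ) < k - ℓ) :
    ∑ i : Fin ℓ, GRLmatrix k ℓ hℓk β A r (Sum.inr i)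
      * (GRLmatrix k ℓ hℓk β A s (Sum.inr i)) ^ q = 0 := by
  apply Finset.sum_eq_zero
  intro i _
  have : GRLmatrix k ℓ hℓk β A s (Sum.inr i) = 0 := by
    show (if _h : (s : ℕ) < k - ℓ then (0:F) else _) = 0
    rw [dif_pos hs]
  rw [this, zero_pow hq, mul_zero]
end S

/-- with `gcd((δ+1)k, q) = 1`, `k ∣ q - 1`, the non-divisibility condition on
`Δ_i = i + (k-i)q`, and `β = (α_1,…,α_k, γ·α_1,…,γ·α_k, …, γ^δ·α_1,…,γ^δ·α_k)`, if
`2ℓ < k`, or `k = 2ℓ` and `k·Σ_{j=0}^{δ} γ^{j(ℓ+(k-ℓ)q)} + Σ a_{1i}^{1+q} ≠ 0`, the GRL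
code is Hermitian LCD. -/
theorem stmt17 {F : Type} [Field F] [Fintype F]
    (q p m : ℕ) (hp : p.Prime) (hodd : Odd p) (hm : 0 < m) (hq : q = p ^ m)
    (hcard : Fintype.card F = q ^ 2)
    (γ : Fˣ) (hγ : ∀ x : Fˣ, x ∈ Subgroup.zpowers γ)
    (k ℓ : ℕ) (hℓ2 : 2 ≤ ℓ) (hℓk : ℓ ≤ k) (hkdvd : k ∣ q ^ 2 - 1)
    (A : Matrix (Fin ℓ) (Fin ℓ) F) (hA : IsUnit A.det)
    (α : Fin k → F)
    (hα : ∀ i : Fin k, α i = (γ : F) ^ ((q ^ 2 - 1) / k * ((i : ℕ) + 1)))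
    (δ : ℕ) (hδ1 : 1 ≤ δ) (hδq : δ ≤ q)
    (hgcd : Nat.gcd ((δ + 1) * k) q = 1) (hkq : k ∣ q - 1)
    (hΔ : ∀ i : ℕ, 1 ≤ i → i ≤ k - 1 →
      ¬ ((q ^ 2 - 1) / Nat.gcd (q ^ 2 - 1) (i + (k - i) * q) ∣ δ + 1))
    (β : (Fin (δ + 1) × Fin k) → F)
    (hβ : ∀ j : Fin (δ + 1) × Fin k, β j = (γ : F) ^ (j.1 : ℕ) * α j.2)
    (hcase : 2 * ℓ < k ∨
      (k = 2 * ℓ ∧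
        (k : F) * (∑ j ∈ Finset.range (δ + 1), (γ : F) ^ (j * (ℓ + (k - ℓ) * q))) +
          ∑ i : Fin ℓ, A ⟨0, by omega⟩ i ^ (1 + q) ≠ 0)) :
    GRLcode k ℓ hℓk β A ⊓ dualH q (GRLcode k ℓ hℓk β A) = ⊥ := by
  -- basic numeric facts
  have hp2 : 2 ≤ p := hp.two_le
  have hpne2 : p ≠ 2 := by
    intro h
    rw [h] at hodd
    rw [Nat.odd_iff] at hodd
    omega
  have hp3 : 3 ≤ p := by omega
  have hq3 : 3 ≤ q := by
    have : p ≤ p ^ m := Nat.le_self_pow hm.ne' p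
    omega
  have hq2 : 2 ≤ q := by omega
  have h2lk : 2 * ℓ ≤ k := by
    rcases hcase with h | ⟨h, _⟩
    · omega
    · omega
  have hℓltk : ℓ < k := by omega
  have hkpos : 0 < k := by omega
  -- q ≡ 1 mod k
  obtain ⟨a, ha⟩ := hkq
  have haq : q = k * a + 1 := by omega
  have hdvd_iff : ∀ r s : ℕ, (k ∣ r + s * q ↔ k ∣ r + s) := by
    intro r s
    have h1 : r + s * q = (r + s) + k * (s * a) := by rw [haq]; ring
    rw [h1]
    constructor
    · intro h
      rw [add_comm] at h
      exact (Nat.dvd_add_right (Dvd.intro _ rfl)).mp h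
    · intro h
      exact Nat.dvd_add h (Dvd.intro _ rfl)
  -- characteristic
  haveI hcharp : CharP F p := by
    have h1 : CharP F (ringChar F) := ringChar.charP F
    have h2 : (ringChar F).Prime := CharP.char_is_prime F (ringChar F)
    have h3 : ((Fintype.card F : ℕ) : F) = 0 := Nat.cast_card_eq_zero F
    have h4 : ringChar F ∣ Fintype.card F := (CharP.cast_eq_zero_iff F (ringChar F) _).mp h3
    rw [hcard, hq] at h4
    have h5 : ringChar F ∣ p := h2.dvd_of_dvd_pow (by rwa [← pow_mul] at h4)
    have h6 : ringChar F = p := (Nat.prime_dvd_prime_iff_eq h2 hp).mp h5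
    rwa [h6] at h1
  have hpq : p ∣ q := by rw [hq]; exact dvd_pow_self p hm.ne'
  have hkF : (k : F) ≠ 0 := by
    intro h
    have hpk : p ∣ k := (CharP.cast_eq_zero_iff F p k).mp h
    have : p ∣ Nat.gcd ((δ + 1) * k) q :=
      Nat.dvd_gcd (Dvd.dvd.mul_left hpk _) hpq
    rw [hgcd] at this
    exact absurd (Nat.le_of_dvd one_pos this) (by omega)
  have hδF : ((δ + 1 : ℕ) : F) ≠ 0 := by
    intro h
    have hpk : p ∣ δ + 1 := (CharP.cast_eq_zero_iff F p (δ + 1)).mp h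
    have : p ∣ Nat.gcd ((δ + 1) * k) q :=
      Nat.dvd_gcd (Dvd.dvd.mul_right hpk _) hpq
    rw [hgcd] at this
    exact absurd (Nat.le_of_dvd one_pos this) (by omega)
  -- setup
  rw [Submodule.eq_bot_iff]
  rintro x ⟨hxC, hxD⟩
  obtain ⟨c, hc⟩ := (Submodule.mem_span_range_iff_exists_fun F).mp hxC
  set G : Matrix (Fin k) ((Fin (δ + 1) × Fin k) ⊕ Fin ℓ) F := GRLmatrix k ℓ hℓk β A with hG
  -- column equations
  have hEq : ∀ s : Fin k, ∑ r, c r * (∑ j, G r j * (G s j) ^ q) = 0 := by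
    intro s
    have hGs : G s ∈ GRLcode k ℓ hℓk β A := Submodule.subset_span ⟨s, rfl⟩
    have hd : ∑ j, x j * (G s j) ^ q = 0 := hxD (G s) hGs
    calc ∑ r, c r * (∑ j, G r j * (G s j) ^ q)
        = ∑ r, ∑ j, c r * (G r j * (G s j) ^ q) := by
          exact Finset.sum_congr rfl fun r _ => Finset.mul_sum _ _ _
      _ = ∑ j, ∑ r, c r * (G r j * (G s j) ^ q) := Finset.sum_comm
      _ = ∑ j, x j * (G s j) ^ q := by
          apply Finset.sum_congr rfl
          intro j _
          have hx : x j = ∑ r, c r * G r j := by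
            rw [← hc]
            simp [Finset.sum_apply]
          rw [hx, Finset.sum_mul]
          exact Finset.sum_congr rfl fun r _ => (mul_assoc _ _ _).symm
      _ = 0 := hd
  -- the B part
  set B : Fin k → Fin k → F :=
    fun r s => ∑ i : Fin ℓ, G r (Sum.inr i) * (G s (Sum.inr i)) ^ q with hB
  have hMs : ∀ r s : Fin k, (∑ j, G r j * (G s j) ^ q)
      = (∑ t ∈ range (δ + 1), ((γ : F) ^ ((r : ℕ) + (s : ℕ) * q)) ^ t)
          * (if k ∣ ((r : ℕ) + (s : ℕ) * q) then (k : F) else 0) + B r s := by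
    intro r s
    rw [hG, Msum_eq q γ k ℓ hℓk A δ α β hβ r s,
      alpha_sum q hq2 hcard γ hγ k hkdvd α hα]
  have hBrow : ∀ r s : Fin k, (r : ℕ) < k - ℓ → B r s = 0 := fun r s hr =>
    Brow_zero q k ℓ hℓk A δ β r s hr
  have hBcol : ∀ r s : Fin k, (s : ℕ) < k - ℓ → B r s = 0 := fun r s hs =>
    Bcol_zero q k ℓ hℓk A δ β (by omega) r s hs
  -- workhorse
  have hW : ∀ (s r₀ : Fin k), k ∣ ((r₀ : ℕ) + (s : ℕ)) →
      (∀ r : Fin k, r ≠ r₀ → c r * B r s = 0) →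
      c r₀ * ((∑ t ∈ range (δ + 1), ((γ : F) ^ ((r₀ : ℕ) + (s : ℕ) * q)) ^ t) * (k : F)
        + B r₀ s) = 0 := by
    intro s r₀ hr₀dvd hblock
    have heq : ∑ r, c r * (∑ j, G r j * (G s j) ^ q)
        = c r₀ * (∑ j, G r₀ j * (G s j) ^ q) := by
      apply Finset.sum_eq_single r₀
      · intro r _ hr
        rw [hMs r s, if_neg, mul_zero, zero_add, mul_comm]
        · rw [mul_comm]; exact hblock r hr
        · intro hd
          rw [hdvd_iff] at hd
          exact hr (Fin.ext (dvd_unique_row r.isLt r₀.isLt hd hr₀dvd))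
      · intro h
        exact absurd (Finset.mem_univ r₀) h
    have := hEq s
    rw [heq, hMs r₀ s, if_pos ((hdvd_iff _ _).mpr hr₀dvd)] at this
    exact this
  -- Step 1: c r = 0 for ℓ < r
  have hbig : ∀ r : Fin k, ℓ < (r : ℕ) → c r = 0 := by
    intro r hr
    set v : ℕ := (r : ℕ) with hv
    have hvk : v < k := r.isLt
    set s : Fin k := ⟨k - v, by omega⟩ with hs
    have h1 : k ∣ (r : ℕ) + (s : ℕ) := ⟨1, by simp only [hs, Fin.val_mk]; omega⟩
    have h2 : ∀ r' : Fin k, r' ≠ r → c r' * B r' s = 0 := by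
      intro r' _
      rw [hBcol r' s (by simp only [hs, Fin.val_mk]; omega), mul_zero]
    have h3 := hW s r h1 h2
    rw [hBcol r s (by simp only [hs, Fin.val_mk]; omega), add_zero] at h3
    have hgeo : (∑ t ∈ range (δ + 1), ((γ : F) ^ ((r : ℕ) + (s : ℕ) * q)) ^ t) ≠ 0 := by
      apply geom_ne_zero q hcard γ hγ
      have : (r : ℕ) + (s : ℕ) * q = v + (k - v) * q := by simp only [hs, Fin.val_mk, hv]
      rw [this]
      exact hΔ v (by omega) (by omega)
    rcases mul_eq_zero.mp h3 with h | h
    · exact h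
    · exact absurd h (mul_ne_zero hgeo hkF)
  -- Step 2: c at row 0
  have hzero : ∀ r : Fin k, (r : ℕ) = 0 → c r = 0 := by
    intro r hr
    have h1 : k ∣ (r : ℕ) + (r : ℕ) := ⟨0, by omega⟩
    have h2 : ∀ r' : Fin k, r' ≠ r → c r' * B r' r = 0 := by
      intro r' _
      rw [hBcol r' r (by omega), mul_zero]
    have h3 := hW r r h1 h2
    rw [hBcol r r (by omega), add_zero] at h3
    have hgeo : (∑ t ∈ range (δ + 1), ((γ : F) ^ ((r : ℕ) + (r : ℕ) * q)) ^ t)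
        = ((δ + 1 : ℕ) : F) := by
      rw [hr]
      simp
    rw [hgeo] at h3
    rcases mul_eq_zero.mp h3 with h | h
    · exact h
    · exact absurd h (mul_ne_zero hδF hkF)
  -- Step 3: middle rows, case analysis
  have hsmall : ∀ r : Fin k, 1 ≤ (r : ℕ) → (r : ℕ) ≤ ℓ → c r = 0 := by
    rcases hcase with hlt | ⟨hek, hne⟩
    · -- 2ℓ < k
      intro r hr1 hr2
      set v : ℕ := (r : ℕ) with hv
      have hvk : v < k := r.isLt
      set s : Fin k := ⟨k - v, by omega⟩ with hs
      have h1 : k ∣ (r : ℕ) + (s : ℕ) := ⟨1, by simp only [hs, Fin.val_mk]; omega⟩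
      have h2 : ∀ r' : Fin k, r' ≠ r → c r' * B r' s = 0 := by
        intro r' hr'
        by_cases hcr : (r' : ℕ) < k - ℓ
        · rw [hBrow r' s hcr, mul_zero]
        · rw [hbig r' (by omega), zero_mul]
      have h3 := hW s r h1 h2
      rw [hBrow r s (by omega), add_zero] at h3
      have hgeo : (∑ t ∈ range (δ + 1), ((γ : F) ^ ((r : ℕ) + (s : ℕ) * q)) ^ t) ≠ 0 := by
        apply geom_ne_zero q hcard γ hγ
        have : (r : ℕ) + (s : ℕ) * q = v + (k - v) * q := by simp only [hs, Fin.val_mk, hv]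
        rw [this]
        exact hΔ v (by omega) (by omega)
      rcases mul_eq_zero.mp h3 with h | h
      · exact h
      · exact absurd h (mul_ne_zero hgeo hkF)
    · -- k = 2ℓ
      have hcl : ∀ r : Fin k, (r : ℕ) = ℓ → c r = 0 := by
        intro r hrℓ
        have h1 : k ∣ (r : ℕ) + (r : ℕ) := ⟨1, by omega⟩
        have h2 : ∀ r' : Fin k, r' ≠ r → c r' * B r' r = 0 := by
          intro r' hr'
          by_cases hcr : (r' : ℕ) < k - ℓ
          · rw [hBrow r' r hcr, mul_zero]
          · have : ℓ < (r' : ℕ) := by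
              rcases Nat.lt_or_ge ℓ (r' : ℕ) with h | h
              · exact h
              · exfalso; apply hr'; apply Fin.ext; omega
            rw [hbig r' this, zero_mul]
        have h3 := hW r r h1 h2
        have hBval : B r r = ∑ i : Fin ℓ, A ⟨0, by omega⟩ i ^ (1 + q) := by
          rw [hB]
          apply Finset.sum_congr rfl
          intro i _
          have hGr : G r (Sum.inr i) = A ⟨0, by omega⟩ i := by
            show (if _h : (r : ℕ) < k - ℓ then (0:F) else
              A ⟨(r : ℕ) - (k - ℓ), _⟩ i) = _
            rw [dif_neg (by omega)]
            congr 1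
            exact Fin.ext (by simp; omega)
          rw [hGr, pow_add, pow_one]
        have hgeoval : (∑ t ∈ range (δ + 1), ((γ : F) ^ ((r : ℕ) + (r : ℕ) * q)) ^ t) * (k : F)
            = (k : F) * (∑ j ∈ Finset.range (δ + 1), (γ : F) ^ (j * (ℓ + (k - ℓ) * q))) := by
          rw [mul_comm]
          congr 1
          apply Finset.sum_congr rfl
          intro j _
          rw [← pow_mul]
          congr 1
          have : (r : ℕ) = ℓ := hrℓ
          have hkl : k - ℓ = ℓ := by omega
          rw [this, hkl]
          ring
        rw [hBval, hgeoval] at h3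
        rcases mul_eq_zero.mp h3 with h | h
        · exact h
        · exact absurd h hne
      intro r hr1 hr2
      rcases Nat.eq_or_lt_of_le hr2 with heq | hlt2
      · exact hcl r heq
      · -- 1 ≤ r ≤ ℓ - 1
        set v : ℕ := (r : ℕ) with hv
        have hvk : v < k := r.isLt
        set s : Fin k := ⟨k - v, by omega⟩ with hs
        have h1 : k ∣ (r : ℕ) + (s : ℕ) := ⟨1, by simp only [hs, Fin.val_mk]; omega⟩
        have h2 : ∀ r' : Fin k, r' ≠ r → c r' * B r' s = 0 := by
          intro r' hr'
          by_cases hcr : (r' : ℕ) < k - ℓ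
          · rw [hBrow r' s hcr, mul_zero]
          · rcases Nat.lt_or_ge ℓ (r' : ℕ) with h | h
            · rw [hbig r' h, zero_mul]
            · have : (r' : ℕ) = ℓ := by omega
              rw [hcl r' this, zero_mul]
        have h3 := hW s r h1 h2
        rw [hBrow r s (by omega), add_zero] at h3
        have hgeo : (∑ t ∈ range (δ + 1), ((γ : F) ^ ((r : ℕ) + (s : ℕ) * q)) ^ t) ≠ 0 := by
          apply geom_ne_zero q hcard γ hγ
          have : (r : ℕ) + (s : ℕ) * q = v + (k - v) * q := by simp only [hs, Fin.val_mk, hv]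
          rw [this]
          exact hΔ v (by omega) (by omega)
        rcases mul_eq_zero.mp h3 with h | h
        · exact h
        · exact absurd h (mul_ne_zero hgeo hkF)
  -- conclude c = 0
  have hcall : ∀ r : Fin k, c r = 0 := by
    intro r
    rcases Nat.eq_zero_or_pos (r : ℕ) with h | h
    · exact hzero r h
    · rcases Nat.lt_or_ge ℓ (r : ℕ) with h2 | h2
      · exact hbig r h2
      · exact hsmall r h h2
  have : x = 0 := by
    rw [← hc]
    apply Finset.sum_eq_zero
    intro r _
    rw [hcall r, zero_smul]

  exact this
end
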